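/- (Product formula.) Let m₁, m₂, e₁, e₂ be integers with e₁ ≥ 0 and e₂ ≥ 0. Then I_Δ(m₁,e₁) · I_Δ(m₂,e₂) = u^{-(m₁e₁ + m₂e₂)} · ((q^{e₁+1};q)_∞ · (q^{e₂+1};q)_∞ / (q;q)_∞²) · Σ_{n=0}^{∞} [ (-1)^n · q^{-m₂n + n(n+1)/2} / ((q^{e₂+1};q)_n · (q;q)_n) · Σ_{j=0}^{n} ((q^{-n};q)_j · (q^{-n-e₂};q)_j / ((q^{e₁+1};q)_j · (q;q)_j)) · q^{j(n - m₁ + m₂ + e₂ + 1)} ], where the outer series converges absolutely and the inner sum is the terminating basic hypergeometric series ₂φ₁(q^{-n}, q^{-n-e₂}; q^{e₁+1}; q, q^{n - m₁ + m₂ + e₂ + 1}). -/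

import Mathlib

open scoped BigOperators

/-- Finite q-Pochhammer symbol `(a;q)_n = ∏_{i=0}^{n-1} (1 - a q^i)`. -/
noncomputable def qPoch (a q : ℂ) (n : ℕ) : ℂ :=
  ∏ i ∈ Finset.range n, (1 - a * q ^ i)

/-- Infinite q-Pochhammer symbol `(a;q)_∞ = ∏_{i=0}^{∞} (1 - a q^i)`. -/
noncomputable def qPochInf (a q : ℂ) : ℂ :=
  ∏' i : ℕ, (1 - a * q ^ i)

/-- The `n`-th term of the series defining the tetrahedral index `I_Δ(m,e)`,
with `q = u^2` and vanishing below `e₊ = max(-e,0)`. -/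
noncomputable def tetTerm (u : ℂ) (m e : ℤ) (n : ℕ) : ℂ :=
  if (-e).toNat ≤ n then
    (-1 : ℂ) ^ n * u ^ ((n : ℤ) * ((n : ℤ) + 1) - (2 * (n : ℤ) + e) * m) /
      (qPoch (u ^ 2) (u ^ 2) n * qPoch (u ^ 2) (u ^ 2) ((n : ℤ) + e).toNat)
  else 0

/-- The tetrahedral index `I_Δ(m,e) = Σ_{n=e₊}^∞ (-1)^n u^{n(n+1)-(2n+e)m}/((q;q)_n (q;q)_{n+e})`. -/
noncomputable def tetIndex (u : ℂ) (m e : ℤ) : ℂ := ∑' n : ℕ, tetTerm u m e n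

/-!
For `e ≥ 0` the tetrahedral index factors as `I_Δ(m,e) = u^{-me} / (q;q)_e · Σ_n t_{m,e}(n)` with
`t_{m,e}(n) = (-1)^n q^{n(n+1)/2 - nm} / ((q;q)_n (q^{e+1};q)_n)`, and these series converge
absolutely (their terms decay like `|q|^{n²/2}`, while `1/(q;q)_n` stays bounded). The product
`I_Δ(m₁,e₁) I_Δ(m₂,e₂)` is therefore a Cauchy product, and its `n`-th coefficient
`Σ_{j+l=n} t_{m₁,e₁}(j) t_{m₂,e₂}(l)` is the `n`-th outer term of the right-hand side, summand by
summand: the reflection `(q^{-n};q)_j (q;q)_{n-j} = (-1)^j q^{j(j-1)/2 - nj} (q;q)_n`, and its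
analogue `(q^{-n-e₂};q)_j (q^{e₂+1};q)_{n-j} = (-1)^j q^{j(j-1)/2 - (n+e₂)j} (q^{e₂+1};q)_n`, turn
the `j`-th term of the ₂φ₁ into `t_{m₁,e₁}(j) t_{m₂,e₂}(n-j)`. The infinite products only
contribute `(q^{e+1};q)_∞ / (q;q)_∞ = 1/(q;q)_e`.
-/

open Filter Topology Finset

section QPochhammer

variable {a q x : ℂ}

theorem qPoch_succ (a q : ℂ) (n : ℕ) : qPoch a q (n + 1) = qPoch a q n * (1 - a * q ^ n) :=
  prod_range_succ _ _

theorem qPoch_add (a q : ℂ) (m n : ℕ) :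
    qPoch a q (m + n) = qPoch a q m * qPoch (a * q ^ m) q n := by
  simp only [qPoch, prod_range_add, pow_add, mul_assoc]

theorem norm_mul_pow_lt_one (ha : ‖a‖ < 1) (hq : ‖q‖ ≤ 1) (n : ℕ) : ‖a * q ^ n‖ < 1 := by
  rw [norm_mul, norm_pow]
  exact mul_lt_one_of_nonneg_of_lt_one_left (norm_nonneg a) ha (pow_le_one₀ (norm_nonneg q) hq)

theorem norm_pow_succ_lt_one (hq : ‖q‖ < 1) (n : ℕ) : ‖q ^ (n + 1)‖ < 1 := by
  rw [norm_pow]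
  exact pow_lt_one₀ (norm_nonneg q) hq n.succ_ne_zero

theorem one_sub_mul_pow_ne_zero (ha : ‖a‖ < 1) (hq : ‖q‖ ≤ 1) (n : ℕ) : 1 - a * q ^ n ≠ 0 := by
  intro h
  have := norm_mul_pow_lt_one ha hq n
  rw [← sub_eq_zero.1 h, norm_one] at this
  exact this.false

theorem qPoch_ne_zero (ha : ‖a‖ < 1) (hq : ‖q‖ ≤ 1) (n : ℕ) : qPoch a q n ≠ 0 :=
  prod_ne_zero_iff.2 fun i _ => one_sub_mul_pow_ne_zero ha hq i

-- `h` says `x = q^{1-k-j} / a`, so that `1 - x q^i = -x q^i (1 - a q^{k+j-1-i})`.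
theorem qPoch_mul_qPoch_of_mul_pow_eq (hq : q ≠ 0) {j k : ℕ} (h : x * a * q ^ (k + j) = q) :
    qPoch x q j * qPoch a q k = (-x) ^ j * q ^ j.choose 2 * qPoch a q (k + j) := by
  induction j generalizing k with
  | zero => simp [qPoch]
  | succ j ih =>
    have hx : x * q ^ j * (a * q ^ k) = 1 := by
      apply mul_left_cancel₀ hq
      linear_combination h
    have ih' := ih (k := k + 1) (by rwa [add_right_comm, add_assoc])
    rw [qPoch_succ a q k, add_right_comm, qPoch_succ a q (k + j)] at ih'
    rw [qPoch_succ x q j, Nat.choose_succ_succ', Nat.choose_one_right, ← add_assoc,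
      qPoch_succ a q (k + j)]
    linear_combination (-(x * q ^ j)) * ih' - qPoch x q j * qPoch a q k * hx

theorem summable_norm_mul_pow (hq : ‖q‖ < 1) (a : ℂ) : Summable fun i : ℕ => ‖-(a * q ^ i)‖ := by
  simpa [norm_mul, norm_pow] using (summable_geometric_of_lt_one (norm_nonneg q) hq).mul_left ‖a‖

theorem multipliable_one_sub_mul_pow (hq : ‖q‖ < 1) (a : ℂ) :
    Multipliable fun i : ℕ => 1 - a * q ^ i := by
  simpa only [← sub_eq_add_neg] using multipliable_one_add_of_summable (summable_norm_mul_pow hq a)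

theorem qPochInf_ne_zero (ha : ‖a‖ < 1) (hq : ‖q‖ < 1) : qPochInf a q ≠ 0 := by
  have := tprod_one_add_ne_zero_of_summable
    (fun i => by simpa only [← sub_eq_add_neg] using one_sub_mul_pow_ne_zero ha hq.le i)
    (summable_norm_mul_pow hq a)
  simpa only [qPochInf, ← sub_eq_add_neg] using this

theorem qPoch_mul_qPochInf (hq : ‖q‖ < 1) (a : ℂ) (n : ℕ) :
    qPoch a q n * qPochInf (a * q ^ n) q = qPochInf a q := by
  have hshift : (fun i => 1 - a * q ^ (i + n)) = fun i => 1 - a * q ^ n * q ^ i := by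
    ext i; ring
  have h := Multipliable.prod_mul_tprod_nat_mul' (f := fun i => 1 - a * q ^ i) (k := n)
    (hshift ▸ multipliable_one_sub_mul_pow hq (a * q ^ n))
  rwa [hshift] at h

theorem qPochInf_mul_pow_div (ha : ‖a‖ < 1) (hq : ‖q‖ < 1) (n : ℕ) :
    qPochInf (a * q ^ n) q / qPochInf a q = (qPoch a q n)⁻¹ := by
  rw [← qPoch_mul_qPochInf hq a n, div_mul_cancel_right₀]
  exact qPochInf_ne_zero (norm_mul_pow_lt_one ha hq.le n) hq

theorem tendsto_qPoch (hq : ‖q‖ < 1) (a : ℂ) : Tendsto (qPoch a q) atTop (𝓝 (qPochInf a q)) :=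
  (multipliable_one_sub_mul_pow hq a).hasProd.tendsto_prod_nat

theorem exists_norm_inv_qPoch_le (ha : ‖a‖ < 1) (hq : ‖q‖ < 1) :
    ∃ C, ∀ n, ‖(qPoch a q n)⁻¹‖ ≤ C := by
  obtain ⟨C, hC⟩ := isBounded_iff_forall_norm_le.1 <| Metric.isBounded_range_of_tendsto _
    ((tendsto_qPoch hq a).inv₀ (qPochInf_ne_zero ha hq))
  exact ⟨C, fun n => hC _ ⟨n, rfl⟩⟩

end QPochhammer

theorem cast_choose_two_mul_two (n : ℕ) : (n.choose 2 : ℤ) * 2 = n * (n - 1) := by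
  cases n with
  | zero => simp
  | succ n =>
    have : (n + 1).choose 2 * 2 = (n + 1) * n := by
      simpa using (Nat.add_one_mul_choose_eq n 1).symm
    push_cast
    rw [add_sub_cancel_right]
    exact_mod_cast this

noncomputable def qTetTerm (q : ℂ) (m : ℤ) (E n : ℕ) : ℂ :=
  (-1) ^ n * q ^ (((n + 1).choose 2 : ℕ) - (n : ℤ) * m) / (qPoch q q n * qPoch (q ^ (E + 1)) q n)

section Tetrahedral

variable {u q : ℂ}

theorem tetTerm_natCast (hu : u ≠ 0) (hq : q = u ^ 2) (m : ℤ) (E n : ℕ) :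
    tetTerm u m E n = u ^ (-(m * E)) / qPoch q q E * qTetTerm q m E n := by
  have hexp : (n : ℤ) * (n + 1) - (2 * n + E) * m =
      -(m * E) + 2 * (((n + 1).choose 2 : ℕ) - n * m) := by
    have := cast_choose_two_mul_two (n + 1)
    push_cast at this
    linear_combination -this
  have hqz : ∀ z : ℤ, q ^ z = u ^ (2 * z) := fun z => by rw [hq, zpow_mul]; norm_cast
  rw [tetTerm, if_pos (by omega), ← hq, show ((n : ℤ) + E).toNat = E + n by omega, qPoch_add,
    ← pow_succ', qTetTerm, hqz, hexp, zpow_add₀ hu]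
  ring

theorem summable_norm_qTetTerm (hq0 : q ≠ 0) (hq : ‖q‖ < 1) (m : ℤ) (E : ℕ) :
    Summable fun n => ‖qTetTerm q m E n‖ := by
  obtain ⟨C, hC⟩ := exists_norm_inv_qPoch_le hq hq
  obtain ⟨C', hC'⟩ := exists_norm_inv_qPoch_le (norm_pow_succ_lt_one hq E) hq
  refine Summable.of_norm_bounded_eventually_nat
    ((summable_geometric_of_lt_one (norm_nonneg q) hq).mul_left (C * C')) ?_
  filter_upwards [eventually_ge_atTop (2 * m.toNat + 1)] with n hn
  have hexp : (n : ℤ) ≤ ((n + 1).choose 2 : ℕ) - n * m := by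
    have := cast_choose_two_mul_two (n + 1)
    push_cast at this
    nlinarith [Int.self_le_toNat m]
  rw [norm_norm, qTetTerm, div_eq_mul_inv, mul_inv, norm_mul, norm_mul, norm_mul, norm_pow,
    norm_neg, norm_one, one_pow, one_mul, norm_zpow, mul_comm (C * C')]
  gcongr
  · exact zpow_le_zpow_right_of_le_one₀ (norm_pos_iff.2 hq0) hq.le hexp
  · exact (norm_nonneg _).trans (hC 0)
  · exact hC n
  · exact hC' n

theorem phi_summand_exponent_eq (m₁ m₂ : ℤ) (E₂ j l : ℕ) :
    (-m₂ * ↑(j + l) + ↑((j + l) * (j + l + 1) / 2)) + -↑(j + l) * ↑j +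
      ↑(j.choose 2 * 2) + (-↑(j + l) - ↑E₂) * ↑j + ↑j * (↑(j + l) - m₁ + m₂ + ↑E₂ + 1) =
      (↑((j + 1).choose 2) - ↑j * m₁) + (↑((l + 1).choose 2) - ↑l * m₂) := by
  have hn : (((j + l) * (j + l + 1) / 2 : ℕ) : ℤ) * 2 = (j + l) * (j + l + 1) := by
    exact_mod_cast Nat.div_mul_cancel (Nat.even_mul_succ_self _).two_dvd
  have h₀ := cast_choose_two_mul_two j
  have h₁ := cast_choose_two_mul_two (j + 1)
  have h₂ := cast_choose_two_mul_two (l + 1)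
  push_cast at hn h₁ h₂ ⊢
  linarith

theorem coeff_mul_phi_summand_eq (hq0 : q ≠ 0) (hq : ‖q‖ < 1) (m₁ m₂ : ℤ) (E₁ E₂ : ℕ) {n j : ℕ}
    (hj : j ≤ n) :
    (-1 : ℂ) ^ n * q ^ (-m₂ * n + ((n * (n + 1) / 2 : ℕ) : ℤ)) /
        (qPoch (q ^ (E₂ + 1)) q n * qPoch q q n) *
      (qPoch (q ^ (-(n : ℤ))) q j * qPoch (q ^ (-(n : ℤ) - E₂)) q j /
          (qPoch (q ^ (E₁ + 1)) q j * qPoch q q j) *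
        q ^ ((j : ℤ) * ((n : ℤ) - m₁ + m₂ + E₂ + 1))) =
      qTetTerm q m₁ E₁ j * qTetTerm q m₂ E₂ (n - j) := by
  obtain ⟨l, rfl⟩ := Nat.exists_eq_add_of_le hj
  have hS := qPoch_ne_zero hq hq.le
  have hT₁ := qPoch_ne_zero (norm_pow_succ_lt_one hq E₁) hq.le
  have hT₂ := qPoch_ne_zero (norm_pow_succ_lt_one hq E₂) hq.le
  have h₁ := qPoch_mul_qPoch_of_mul_pow_eq (x := q ^ (-((j + l : ℕ) : ℤ))) (a := q) (k := l) hq0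
    (by rw [mul_assoc, ← pow_succ', ← zpow_natCast, ← zpow_add₀ hq0]; convert zpow_one q using 2; push_cast; ring)
  have h₂ := qPoch_mul_qPoch_of_mul_pow_eq (x := q ^ (-((j + l : ℕ) : ℤ) - E₂))
    (a := q ^ (E₂ + 1)) (k := l) hq0
    (by rw [mul_assoc, ← pow_add, ← zpow_natCast, ← zpow_add₀ hq0]; convert zpow_one q using 2; push_cast; ring)
  rw [Nat.add_sub_cancel_left, qTetTerm, qTetTerm, eq_div_of_mul_eq (hS l) h₁,
    eq_div_of_mul_eq (hT₂ l) h₂, neg_pow (q ^ _), neg_pow (q ^ _), ← zpow_natCast (q ^ _) j,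
    ← zpow_natCast (q ^ _) j, ← zpow_mul, ← zpow_mul, add_comm l j]
  field_simp [hS, hT₁, hT₂]
  have hsign : (-1 : ℂ) ^ (j + l) * (-1) ^ j = (-1) ^ l := by
    rw [pow_add, mul_right_comm, ← pow_add, Even.neg_one_pow ⟨j, rfl⟩, one_mul]
  have hz := congrArg (q ^ ·) (phi_summand_exponent_eq m₁ m₂ E₂ j l)
  rw [← pow_mul, ← zpow_natCast q (j.choose 2 * 2), mul_right_comm _ _ ((-1 : ℂ) ^ j), hsign]
  simp only [zpow_add₀ hq0] at hz ⊢
  linear_combination (-1 : ℂ) ^ l * hz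

theorem coeff_mul_phi_eq_sum_antidiagonal (hq0 : q ≠ 0) (hq : ‖q‖ < 1) (m₁ m₂ : ℤ)
    (E₁ E₂ n : ℕ) :
    (-1 : ℂ) ^ n * q ^ (-m₂ * n + ((n * (n + 1) / 2 : ℕ) : ℤ)) /
        (qPoch (q ^ (E₂ + 1)) q n * qPoch q q n) *
      ∑ j ∈ range (n + 1),
        qPoch (q ^ (-(n : ℤ))) q j * qPoch (q ^ (-(n : ℤ) - E₂)) q j /
            (qPoch (q ^ (E₁ + 1)) q j * qPoch q q j) *
          q ^ ((j : ℤ) * ((n : ℤ) - m₁ + m₂ + E₂ + 1)) =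
      ∑ kl ∈ antidiagonal n, qTetTerm q m₁ E₁ kl.1 * qTetTerm q m₂ E₂ kl.2 := by
  rw [Nat.sum_antidiagonal_eq_sum_range_succ_mk, mul_sum]
  exact sum_congr rfl fun j hj =>
    coeff_mul_phi_summand_eq hq0 hq m₁ m₂ E₁ E₂ (Nat.lt_succ_iff.1 (mem_range.1 hj))

end Tetrahedral

/-- product formula: for `e₁, e₂ ≥ 0`,
`I_Δ(m₁,e₁) I_Δ(m₂,e₂) = q^{-(m₁e₁+m₂e₂)/2} ((q^{e₁+1};q)_∞ (q^{e₂+1};q)_∞/(q;q)_∞²) ·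
 Σ_{n≥0} (-1)^n q^{-m₂n + n(n+1)/2}/((q^{e₂+1};q)_n (q;q)_n) ·
   ₂φ₁(q^{-n}, q^{-n-e₂}; q^{e₁+1}; q, q^{n-m₁+m₂+e₂+1})`,
with the outer series absolutely convergent; here `u = q^{1/2}`. -/
theorem stmt_14 (u : ℂ) (hu0 : 0 < ‖u‖) (hu1 : ‖u‖ < 1) (q : ℂ) (hq : q = u ^ 2)
    (m₁ m₂ e₁ e₂ : ℤ) (he₁ : 0 ≤ e₁) (he₂ : 0 ≤ e₂) :
    Summable (fun n : ℕ =>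
      ‖(-1 : ℂ) ^ n * q ^ (-m₂ * n + ((n * (n + 1) / 2 : ℕ) : ℤ)) /
          (qPoch (q ^ (e₂ + 1)) q n * qPoch q q n) *
        ∑ j ∈ Finset.range (n + 1),
          qPoch (q ^ (-(n : ℤ))) q j * qPoch (q ^ (-(n : ℤ) - e₂)) q j /
            (qPoch (q ^ (e₁ + 1)) q j * qPoch q q j) *
          q ^ ((j : ℤ) * ((n : ℤ) - m₁ + m₂ + e₂ + 1))‖) ∧
    tetIndex u m₁ e₁ * tetIndex u m₂ e₂ =
      u ^ (-(m₁ * e₁ + m₂ * e₂)) *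
        (qPochInf (q ^ (e₁ + 1)) q * qPochInf (q ^ (e₂ + 1)) q / (qPochInf q q) ^ 2) *
        ∑' n : ℕ, (-1 : ℂ) ^ n * q ^ (-m₂ * n + ((n * (n + 1) / 2 : ℕ) : ℤ)) /
            (qPoch (q ^ (e₂ + 1)) q n * qPoch q q n) *
          ∑ j ∈ Finset.range (n + 1),
            qPoch (q ^ (-(n : ℤ))) q j * qPoch (q ^ (-(n : ℤ) - e₂)) q j /
              (qPoch (q ^ (e₁ + 1)) q j * qPoch q q j) *
            q ^ ((j : ℤ) * ((n : ℤ) - m₁ + m₂ + e₂ + 1)) := by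
  lift e₁ to ℕ using he₁ with E₁
  lift e₂ to ℕ using he₂ with E₂
  have hu : u ≠ 0 := norm_pos_iff.1 hu0
  have hq0 : q ≠ 0 := hq ▸ pow_ne_zero 2 hu
  have hq1 : ‖q‖ < 1 := by rw [hq, norm_pow]; exact pow_lt_one₀ hu0.le hu1 two_ne_zero
  have hcast (E : ℕ) : q ^ ((E : ℤ) + 1) = q ^ (E + 1) := by exact_mod_cast zpow_natCast q (E + 1)
  have hratio (E : ℕ) : qPochInf (q ^ (E + 1)) q / qPochInf q q = (qPoch q q E)⁻¹ := by
    rw [pow_succ']; exact qPochInf_mul_pow_div hq1 hq1 E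
  have hindex (m : ℤ) (E : ℕ) :
      tetIndex u m E = u ^ (-(m * E)) / qPoch q q E * ∑' n, qTetTerm q m E n := by
    rw [tetIndex, ← tsum_mul_left]; exact tsum_congr (tetTerm_natCast hu hq m E)
  have hsum₁ := summable_norm_qTetTerm hq0 hq1 m₁ E₁
  have hsum₂ := summable_norm_qTetTerm hq0 hq1 m₂ E₂
  have hterm := coeff_mul_phi_eq_sum_antidiagonal hq0 hq1 m₁ m₂ E₁ E₂
  simp only [hcast, hterm]
  refine ⟨summable_norm_sum_mul_antidiagonal_of_summable_norm hsum₁ hsum₂, ?_⟩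
  rw [← tsum_mul_tsum_eq_tsum_sum_antidiagonal_of_summable_norm hsum₁ hsum₂, hindex, hindex, sq,
    mul_div_mul_comm, hratio, hratio, neg_add, zpow_add₀ hu]
  ring
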